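/- Let n ≥ 1, a < t₁ < b, and let R : (a, b) → (n×n real symmetric matrices) be smooth. Let J : (a, b) → (n×n real matrices) be the solution of J'' + R·J = 0 with J(t₁) = 0 and J'(t₁) = Iₙ, and assume J(t) is invertible for every t ∈ (t₁, b). Fix s ∈ (t₁, b). Then there exists a unique C² solution D : (a, b) → (n×n real matrices) of D'' + R·D = 0 with D(t₁) = Iₙ and D(s) = 0; on (t₁, b) it is given by the formula D(t) = J(t) · ∫ from t to s of (J(r)ᵀ·J(r))^{−1} dr; and D(t) is invertible for every t ∈ (t₁, s). -/

import Mathlib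

open Matrix MeasureTheory

attribute [local instance] Matrix.normedAddCommGroup Matrix.normedSpace

/-- `D` is a `C²` solution of the matrix Jacobi equation `D'' + R·D = 0`
on the open interval `(a,b)`. -/
def IsC2JacobiSol (n : ℕ) (a b : ℝ) (R D : ℝ → Matrix (Fin n) (Fin n) ℝ) : Prop :=
  (∀ t ∈ Set.Ioo a b, DifferentiableAt ℝ D t) ∧
  (∀ t ∈ Set.Ioo a b, DifferentiableAt ℝ (deriv D) t) ∧
  ContinuousOn (deriv (deriv D)) (Set.Ioo a b) ∧
  ∀ t ∈ Set.Ioo a b, deriv (deriv D) t + R t * D t = 0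

section JacobiAuxSection

open Set
open scoped NNReal

namespace JacobiAux

section Toolkit
variable {n : ℕ}

local notation "Mn" => Matrix (Fin n) (Fin n) ℝ


noncomputable def entryCLM (i j : Fin n) : Mn →L[ℝ] ℝ :=
  LinearMap.toContinuousLinearMap
    { toFun := fun A => A i j
      map_add' := fun _ _ => rfl
      map_smul' := fun _ _ => rfl }

@[simp] lemma entryCLM_apply (i j : Fin n) (A : Mn) : entryCLM i j A = A i j := rfl

noncomputable def transCLM : Mn →L[ℝ] Mn :=
  LinearMap.toContinuousLinearMap
    { toFun := fun A => Aᵀ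
      map_add' := Matrix.transpose_add
      map_smul' := Matrix.transpose_smul }

@[simp] lemma transCLM_apply (A : Mn) : transCLM A = Aᵀ := rfl

noncomputable def mulCLM : Mn →L[ℝ] Mn →L[ℝ] Mn :=
  LinearMap.toContinuousLinearMap
    { toFun := fun A => LinearMap.toContinuousLinearMap (LinearMap.mulLeft ℝ A)
      map_add' := fun A B => by
        ext C
        simp [LinearMap.mulLeft_apply, add_mul]
      map_smul' := fun c A => by
        ext C
        simp [LinearMap.mulLeft_apply, smul_mul_assoc] }

@[simp] lemma mulCLM_apply (A B : Mn) : mulCLM A B = A * B := rfl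

lemma _root_.HasDerivAt.matmul {f g : ℝ → Mn} {f' g' : Mn} {t : ℝ}
    (hf : HasDerivAt f f' t) (hg : HasDerivAt g g' t) :
    HasDerivAt (fun u => f u * g u) (f' * g t + f t * g') t := by
  have h1 := mulCLM.hasDerivAt_of_bilinear (fun _ => hf) (fun _ => hg)
  rw [add_comm]
  exact h1

lemma _root_.HasDerivAt.mtrans {f : ℝ → Mn} {f' : Mn} {t : ℝ} (hf : HasDerivAt f f' t) :
    HasDerivAt (fun u => (f u)ᵀ) f'ᵀ t := by
  exact transCLM.hasFDerivAt.comp_hasDerivAt t hf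

lemma diff_entry {M : ℝ → Mn} {t : ℝ} (h : DifferentiableAt ℝ M t) (i j : Fin n) :
    DifferentiableAt ℝ (fun u => M u i j) t := by
  exact ((entryCLM i j).differentiableAt.comp t h)

lemma differentiableAt_of_entries {M : ℝ → Mn} {t : ℝ}
    (h : ∀ i j, DifferentiableAt ℝ (fun u => M u i j) t) : DifferentiableAt ℝ M t := by
  have hM : M = fun u => ∑ i : Fin n, ∑ j : Fin n, (M u i j) • Matrix.single i j (1 : ℝ) := by
    funext u
    conv_lhs => rw [matrix_eq_sum_single (M u)]
    simp [smul_single]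
  rw [hM]
  apply DifferentiableAt.fun_sum
  intro i _
  apply DifferentiableAt.fun_sum
  intro j _
  exact (h i j).smul_const _

lemma differentiableAt_prod {ι : Type*} (s : Finset ι) {f : ι → ℝ → ℝ} {t : ℝ}
    (h : ∀ i ∈ s, DifferentiableAt ℝ (f i) t) :
    DifferentiableAt ℝ (fun u => ∏ i ∈ s, f i u) t := by
  classical
  induction s using Finset.induction with
  | empty => simp [differentiableAt_const]
  | insert _ _ hx ih =>
    rename_i a s'
    simp only [Finset.prod_insert hx]
    exact (h a (Finset.mem_insert_self a s')).mul
      (ih fun i hi => h i (Finset.mem_insert_of_mem hi))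

lemma differentiableAt_det {M : ℝ → Mn} {t : ℝ}
    (h : ∀ i j, DifferentiableAt ℝ (fun u => M u i j) t) :
    DifferentiableAt ℝ (fun u => (M u).det) t := by
  have : (fun u => (M u).det)
      = fun u => ∑ σ : Equiv.Perm (Fin n), ((Equiv.Perm.sign σ : ℤ) : ℝ) * ∏ i, M u (σ i) i := by
    funext u; rw [Matrix.det_apply']
  rw [this]
  apply DifferentiableAt.fun_sum
  intro σ _
  exact (differentiableAt_prod Finset.univ fun i _ => h (σ i) i).const_mul _

lemma differentiableAt_inv_matrix {M : ℝ → Mn} {t : ℝ}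
    (hd : DifferentiableAt ℝ M t) (hu : IsUnit (M t)) :
    DifferentiableAt ℝ (fun u => (M u)⁻¹) t := by
  have hdet : DifferentiableAt ℝ (fun u => (M u).det) t :=
    differentiableAt_det fun i j => diff_entry hd i j
  have hne : (M t).det ≠ 0 := by
    have := (Matrix.isUnit_iff_isUnit_det _).mp hu
    exact IsUnit.ne_zero this
  have hadj : DifferentiableAt ℝ (fun u => (M u).adjugate) t := by
    apply differentiableAt_of_entries
    intro i j
    have : (fun u => (M u).adjugate i j)
        = fun u => ((M u).updateRow j (Pi.single i 1)).det := by
      funext u; rw [Matrix.adjugate_apply]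
    rw [this]
    apply differentiableAt_det
    intro i' j'
    rcases eq_or_ne i' j with rfl | hne'
    · simp only [Matrix.updateRow_self]
      exact differentiableAt_const _
    · simp only [Matrix.updateRow_ne hne']
      exact diff_entry hd i' j'
  have : (fun u => (M u)⁻¹) = fun u => ((M u).det)⁻¹ • (M u).adjugate := by
    funext u
    rw [Matrix.inv_def, Ring.inverse_eq_inv']
  rw [this]
  exact (hdet.inv hne).smul hadj

lemma norm_matmul_le (A B : Mn) : ‖A * B‖ ≤ (n : ℝ) * ‖A‖ * ‖B‖ := by
  have h0 : (0 : ℝ) ≤ (n : ℝ) * ‖A‖ * ‖B‖ := by positivity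
  rw [Matrix.norm_le_iff h0]
  intro i j
  rw [Matrix.mul_apply]
  calc ‖∑ k, A i k * B k j‖ ≤ ∑ k, ‖A i k * B k j‖ := norm_sum_le _ _
    _ ≤ ∑ _k : Fin n, ‖A‖ * ‖B‖ := by
        apply Finset.sum_le_sum
        intro k _
        rw [norm_mul]
        exact mul_le_mul (Matrix.norm_entry_le_entrywise_sup_norm A)
          (Matrix.norm_entry_le_entrywise_sup_norm B) (norm_nonneg _) (norm_nonneg _)
    _ = (n : ℝ) * ‖A‖ * ‖B‖ := by
        rw [Finset.sum_const, Finset.card_univ, Fintype.card_fin, nsmul_eq_mul, mul_assoc]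

lemma _root_.ContinuousOn.matmul' {X : Type*} [TopologicalSpace X] {f g : X → Mn} {s : Set X}
    (hf : ContinuousOn f s) (hg : ContinuousOn g s) :
    ContinuousOn (fun x => f x * g x) s := by
  rw [continuousOn_iff_continuous_restrict] at *
  exact hf.matrix_mul hg

lemma uIcc_subset_Ioo' {a b t u : ℝ} (ht : t ∈ Set.Ioo a b) (hu : u ∈ Set.Ioo a b) :
    Set.uIcc t u ⊆ Set.Ioo a b := fun x hx =>
  ⟨lt_of_lt_of_le (lt_min ht.1 hu.1) hx.1, lt_of_le_of_lt hx.2 (max_lt ht.2 hu.2)⟩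


end Toolkit

section ODE
variable {F : Type*} [NormedAddCommGroup F] [NormedSpace ℝ F] [CompleteSpace F]


noncomputable def cl (c d u : ℝ) : ℝ := max c (min u d)

lemma cl_mem {c d : ℝ} (h : c ≤ d) (u : ℝ) : cl c d u ∈ Icc c d :=
  ⟨le_max_left _ _, max_le h (min_le_right _ _)⟩

lemma cl_of_mem {c d u : ℝ} (h : u ∈ Icc c d) : cl c d u = u := by
  rw [cl, min_eq_left h.2, max_eq_right h.1]

lemma continuous_cl (c d : ℝ) : Continuous (cl c d) :=
  continuous_const.max (continuous_id.min continuous_const)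

lemma uIcc_subset_Icc' {c d x y : ℝ} (hx : x ∈ Icc c d) (hy : y ∈ Icc c d) :
    uIcc x y ⊆ Icc c d := fun u hu =>
  ⟨le_trans (le_min hx.1 hy.1) hu.1, le_trans hu.2 (max_le hx.2 hy.2)⟩

lemma abs_integral_abs_pow (m : ℕ) (τ y : ℝ) :
    |∫ u in τ..y, |u - τ| ^ m| = |y - τ| ^ (m + 1) / (m + 1) := by
  rcases le_total τ y with h | h
  · have hcong : EqOn (fun u => |u - τ| ^ m) (fun u => (u - τ) ^ m) (uIcc τ y) := by
      intro u hu
      rw [uIcc_of_le h] at hu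
      simp only
      rw [abs_of_nonneg (sub_nonneg.2 hu.1)]
    rw [intervalIntegral.integral_congr hcong,
      intervalIntegral.integral_comp_sub_right (fun x => x ^ m) τ, sub_self, integral_pow,
      zero_pow (Nat.succ_ne_zero m), sub_zero, abs_of_nonneg (sub_nonneg.2 h),
      abs_of_nonneg]
    exact div_nonneg (pow_nonneg (sub_nonneg.2 h) _) (by positivity)
  · have hcong : EqOn (fun u => |u - τ| ^ m) (fun u => (τ - u) ^ m) (uIcc τ y) := by
      intro u hu
      rw [uIcc_of_ge h] at hu
      simp only
      rw [abs_of_nonpos (sub_nonpos.2 hu.2), neg_sub]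
    rw [intervalIntegral.integral_congr hcong, intervalIntegral.integral_symm,
      intervalIntegral.integral_comp_sub_left (fun x => x ^ m) τ, sub_self, integral_pow,
      zero_pow (Nat.succ_ne_zero m), sub_zero, abs_neg, abs_of_nonpos (sub_nonpos.2 h),
      abs_of_nonneg]
    · rw [neg_sub]
    · exact div_nonneg (pow_nonneg (sub_nonneg.2 h) _) (by positivity)

theorem existsUnique_fix (v : ℝ → F → F) (c d τ₀ : ℝ) (hτ : τ₀ ∈ Icc c d)
    (hv : ContinuousOn (fun p : ℝ × F => v p.1 p.2) (Icc c d ×ˢ univ))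
    (K : ℝ≥0) (hK : ∀ t ∈ Icc c d, LipschitzWith K (v t)) (p₀ : F) :
    ∃! A : BoundedContinuousFunction ℝ F, ∀ t : ℝ,
      A t = p₀ + ∫ u in τ₀..(cl c d t), v (cl c d u) (A (cl c d u)) := by
  classical
  have hcd : c ≤ d := le_trans hτ.1 hτ.2
  have hg : ∀ A : BoundedContinuousFunction ℝ F,
      Continuous fun u => v (cl c d u) (A (cl c d u)) := by
    intro A
    have hpair : Continuous fun u => ((cl c d u, A (cl c d u)) : ℝ × F) :=
      (continuous_cl c d).prodMk (A.continuous.comp (continuous_cl c d))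
    exact hv.comp_continuous hpair fun u => ⟨cl_mem hcd u, mem_univ _⟩
  have hTc : ∀ A : BoundedContinuousFunction ℝ F,
      Continuous fun t => p₀ + ∫ u in τ₀..cl c d t, v (cl c d u) (A (cl c d u)) := by
    intro A
    have hP : Continuous fun y => ∫ u in τ₀..y, v (cl c d u) (A (cl c d u)) :=
      intervalIntegral.continuous_primitive (fun a' b' => (hg A).intervalIntegrable a' b') τ₀
    exact continuous_const.add (hP.comp (continuous_cl c d))
  have hTb : ∀ A : BoundedContinuousFunction ℝ F, ∃ C, ∀ t,
      ‖p₀ + ∫ u in τ₀..cl c d t, v (cl c d u) (A (cl c d u))‖ ≤ C := by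
    intro A
    obtain ⟨C, hC⟩ := isCompact_Icc.exists_bound_of_continuousOn (s := Icc c d) (hTc A).continuousOn
    refine ⟨C, fun t => ?_⟩
    have h1 := hC (cl c d t) (cl_mem hcd t)
    rwa [cl_of_mem (cl_mem hcd t)] at h1
  choose CC hCC using hTb
  let T : BoundedContinuousFunction ℝ F → BoundedContinuousFunction ℝ F := fun A =>
    BoundedContinuousFunction.ofNormedAddCommGroup _ (hTc A) (CC A) (hCC A)
  have hTapp : ∀ (A : BoundedContinuousFunction ℝ F) (t : ℝ),
      T A t = p₀ + ∫ u in τ₀..cl c d t, v (cl c d u) (A (cl c d u)) := fun A t => rfl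
  have hfix_iff : ∀ A : BoundedContinuousFunction ℝ F,
      (∀ t : ℝ, A t = p₀ + ∫ u in τ₀..cl c d t, v (cl c d u) (A (cl c d u)))
        ↔ Function.IsFixedPt T A := by
    intro A
    constructor
    · intro h
      apply BoundedContinuousFunction.ext
      intro t
      rw [hTapp, ← h t]
    · intro h t
      conv_lhs => rw [← h]
      exact hTapp A t
  -- iterated contraction bound
  have key : ∀ m : ℕ, ∀ A B : BoundedContinuousFunction ℝ F, ∀ t : ℝ,
      dist (T^[m] A t) (T^[m] B t)
        ≤ (K : ℝ) ^ m * |cl c d t - τ₀| ^ m / m.factorial * dist A B := by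
    intro m
    induction m with
    | zero =>
      intro A B t
      simpa using BoundedContinuousFunction.dist_coe_le_dist (f := A) (g := B) t
    | succ m ih =>
      intro A B t
      rw [Function.iterate_succ_apply', Function.iterate_succ_apply']
      set A' := T^[m] A with hA'
      set B' := T^[m] B with hB'
      set y := cl c d t with hy
      have hyI : y ∈ Icc c d := cl_mem hcd t
      have hsub : uIoc τ₀ y ⊆ Icc c d := fun u hu =>
        ⟨le_trans (le_min hτ.1 hyI.1) hu.1.le, le_trans hu.2 (max_le hτ.2 hyI.2)⟩
      have hIA : IntervalIntegrable (fun u => v (cl c d u) (A' (cl c d u))) volume τ₀ y :=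
        (hg A').intervalIntegrable τ₀ y
      have hIB : IntervalIntegrable (fun u => v (cl c d u) (B' (cl c d u))) volume τ₀ y :=
        (hg B').intervalIntegrable τ₀ y
      have step1 : dist (T A' t) (T B' t)
          = ‖∫ u in τ₀..y, (v (cl c d u) (A' (cl c d u)) - v (cl c d u) (B' (cl c d u)))‖ := by
        rw [dist_eq_norm, hTapp, hTapp, intervalIntegral.integral_sub hIA hIB]
        congr 1
        abel
      rw [step1]
      have hφint : IntervalIntegrable
          (fun u => (K : ℝ) ^ (m + 1) * dist A B / m.factorial * |u - τ₀| ^ m) volume τ₀ y := by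
        apply Continuous.intervalIntegrable
        fun_prop
      have hbound : ∀ᵐ u ∂volume.restrict (uIoc τ₀ y),
          ‖v (cl c d u) (A' (cl c d u)) - v (cl c d u) (B' (cl c d u))‖
            ≤ (K : ℝ) ^ (m + 1) * dist A B / m.factorial * |u - τ₀| ^ m := by
        rw [ae_restrict_iff' measurableSet_uIoc]
        apply Filter.Eventually.of_forall
        intro u hu
        have huI : u ∈ Icc c d := hsub hu
        rw [cl_of_mem huI, ← dist_eq_norm]
        calc dist (v u (A' u)) (v u (B' u)) ≤ K * dist (A' u) (B' u) :=
              (hK u huI).dist_le_mul _ _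
          _ ≤ K * ((K : ℝ) ^ m * |cl c d u - τ₀| ^ m / m.factorial * dist A B) := by
              apply mul_le_mul_of_nonneg_left _ K.coe_nonneg
              exact ih A B u
          _ = (K : ℝ) ^ (m + 1) * dist A B / m.factorial * |u - τ₀| ^ m := by
              rw [cl_of_mem huI]
              push_cast
              ring
      calc ‖∫ u in τ₀..y, (v (cl c d u) (A' (cl c d u)) - v (cl c d u) (B' (cl c d u)))‖
          ≤ |∫ u in τ₀..y, (K : ℝ) ^ (m + 1) * dist A B / m.factorial * |u - τ₀| ^ m| :=
            intervalIntegral.norm_integral_le_abs_of_norm_le hbound hφint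
        _ = (K : ℝ) ^ (m + 1) * dist A B / m.factorial * |∫ u in τ₀..y, |u - τ₀| ^ m| := by
            rw [intervalIntegral.integral_const_mul, abs_mul, abs_of_nonneg (by positivity)]
        _ = (K : ℝ) ^ (m + 1) * |y - τ₀| ^ (m + 1) / (m + 1).factorial * dist A B := by
            rw [abs_integral_abs_pow m τ₀ y, Nat.factorial_succ]
            have h1 : ((m.factorial : ℝ)) ≠ 0 := Nat.cast_ne_zero.2 m.factorial_ne_zero
            have h2 : ((m : ℝ) + 1) ≠ 0 := by positivity
            push_cast
            field_simp
  have hTm : ∀ m : ℕ, ∀ A B : BoundedContinuousFunction ℝ F,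
      dist (T^[m] A) (T^[m] B) ≤ ((K : ℝ) * (d - c)) ^ m / m.factorial * dist A B := by
    intro m A B
    have hdc : (0 : ℝ) ≤ d - c := sub_nonneg.2 hcd
    have hq : (0 : ℝ) ≤ ((K : ℝ) * (d - c)) ^ m / m.factorial * dist A B := by
      apply mul_nonneg _ dist_nonneg
      apply div_nonneg (pow_nonneg (mul_nonneg K.coe_nonneg hdc) m) (by positivity)
    apply (BoundedContinuousFunction.dist_le hq).2
    intro t
    refine le_trans (key m A B t) ?_
    have h1 : |cl c d t - τ₀| ≤ d - c := by
      have h2 := cl_mem hcd t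
      rw [abs_le]
      constructor <;> [linarith [h2.1, hτ.2]; linarith [h2.2, hτ.1]]
    rw [mul_pow]
    gcongr
  obtain ⟨m, hm⟩ : ∃ m : ℕ, ((K : ℝ) * (d - c)) ^ m / m.factorial < 1 := by
    have := FloorSemiring.tendsto_pow_div_factorial_atTop ((K : ℝ) * (d - c))
    exact (this.eventually_lt_const one_pos).exists
  have hq0 : (0 : ℝ) ≤ ((K : ℝ) * (d - c)) ^ m / m.factorial := by
    apply div_nonneg (pow_nonneg (mul_nonneg K.coe_nonneg (sub_nonneg.2 hcd)) m) (by positivity)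
  have hcontract : ContractingWith (((K : ℝ) * (d - c)) ^ m / m.factorial).toNNReal (T^[m]) := by
    constructor
    · rw [← Real.toNNReal_one]
      exact (Real.toNNReal_lt_toNNReal_iff one_pos).2 hm
    · apply LipschitzWith.of_dist_le_mul
      intro A B
      rw [Real.coe_toNNReal _ hq0]
      exact hTm m A B
  set Afix := ContractingWith.fixedPoint (T^[m]) hcontract with hAfix
  have hTfix : Function.IsFixedPt T Afix := hcontract.isFixedPt_fixedPoint_iterate
  refine ⟨Afix, (hfix_iff Afix).2 hTfix, ?_⟩
  intro B hB
  have hBfix : Function.IsFixedPt (T^[m]) B := ((hfix_iff B).1 hB).iterate m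
  exact hcontract.fixedPoint_unique hBfix


/-- Admissible compact subinterval. -/
def adm (a b τ₀ c d : ℝ) : Prop := a < c ∧ c ≤ τ₀ ∧ τ₀ ≤ d ∧ d < b

lemma adm.hcd {a b τ₀ c d : ℝ} (h : adm a b τ₀ c d) : c ≤ d := le_trans h.2.1 h.2.2.1

lemma adm.subset {a b τ₀ c d : ℝ} (h : adm a b τ₀ c d) : Icc c d ⊆ Ioo a b :=
  fun x hx => ⟨lt_of_lt_of_le h.1 hx.1, lt_of_le_of_lt hx.2 h.2.2.2⟩

lemma adm.tau_mem {a b τ₀ c d : ℝ} (h : adm a b τ₀ c d) : τ₀ ∈ Icc c d := ⟨h.2.1, h.2.2.1⟩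

lemma adm_cc_dd {a b τ₀ t : ℝ} (hτ : τ₀ ∈ Ioo a b) (ht : t ∈ Ioo a b) :
    adm a b τ₀ ((a + min t τ₀) / 2) ((max t τ₀ + b) / 2) := by
  have h1 : a < min t τ₀ := lt_min ht.1 hτ.1
  have h2 : max t τ₀ < b := max_lt ht.2 hτ.2
  have h3 : min t τ₀ ≤ τ₀ := min_le_right _ _
  have h4 : τ₀ ≤ max t τ₀ := le_max_right _ _
  exact ⟨by linarith, by linarith, by linarith, by linarith⟩

lemma mem_Ioo_cc_dd {a b τ₀ t : ℝ} (hτ : τ₀ ∈ Ioo a b) (ht : t ∈ Ioo a b) :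
    t ∈ Ioo ((a + min t τ₀) / 2) ((max t τ₀ + b) / 2) := by
  have h1 : a < min t τ₀ := lt_min ht.1 hτ.1
  have h2 : max t τ₀ < b := max_lt ht.2 hτ.2
  have h3 : min t τ₀ ≤ t := min_le_left _ _
  have h4 : t ≤ max t τ₀ := le_max_left _ _
  constructor <;> [linarith; linarith]

theorem ode_exists (a b τ₀ : ℝ) (hτ : τ₀ ∈ Ioo a b) (v : ℝ → F → F)
    (hv : ContinuousOn (fun p : ℝ × F => v p.1 p.2) (Ioo a b ×ˢ univ))
    (hlip : ∀ c d, a < c → d < b → ∃ K : ℝ≥0, ∀ t ∈ Icc c d, LipschitzWith K (v t))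
    (p₀ : F) :
    ∃ A : ℝ → F, A τ₀ = p₀ ∧ ∀ t ∈ Ioo a b, HasDerivAt A (v t (A t)) t := by
  classical
  have main : ∀ c d, adm a b τ₀ c d → ∃! A : BoundedContinuousFunction ℝ F, ∀ t : ℝ,
      A t = p₀ + ∫ u in τ₀..(cl c d t), v (cl c d u) (A (cl c d u)) := by
    intro c d h
    obtain ⟨K, hK⟩ := hlip c d h.1 h.2.2.2
    exact existsUnique_fix v c d τ₀ h.tau_mem
      (hv.mono (Set.prod_mono h.subset (subset_refl _))) K hK p₀
  set sol : ∀ c d, adm a b τ₀ c d → BoundedContinuousFunction ℝ F :=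
    fun c d h => (main c d h).exists.choose with hsoldef
  have hsol : ∀ c d (h : adm a b τ₀ c d), ∀ t : ℝ,
      sol c d h t = p₀ + ∫ u in τ₀..(cl c d t), v (cl c d u) (sol c d h (cl c d u)) :=
    fun c d h => (main c d h).exists.choose_spec
  have huniq : ∀ c d (h : adm a b τ₀ c d) (B : BoundedContinuousFunction ℝ F),
      (∀ t : ℝ, B t = p₀ + ∫ u in τ₀..(cl c d t), v (cl c d u) (B (cl c d u))) →
      B = sol c d h :=
    fun c d h B hB => (main c d h).unique hB (hsol c d h)
  -- restriction agreement
  have agree : ∀ c d (h : adm a b τ₀ c d) c' d' (h' : adm a b τ₀ c' d'), c' ≤ c → d ≤ d' →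
      ∀ t ∈ Icc c d, sol c d h t = sol c' d' h' t := by
    intro c d h c' d' h' hcc hdd t htI
    have hBc : Continuous fun u => sol c' d' h' (cl c d u) :=
      (sol c' d' h').continuous.comp (continuous_cl c d)
    have hBb : ∀ u : ℝ, ‖sol c' d' h' (cl c d u)‖ ≤ ‖sol c' d' h'‖ :=
      fun u => (sol c' d' h').norm_coe_le_norm _
    set B := BoundedContinuousFunction.ofNormedAddCommGroup _ hBc _ hBb with hBdef
    have hBeq : ∀ u : ℝ, B u = sol c' d' h' (cl c d u) := fun u => rfl
    have hB : ∀ t : ℝ, B t = p₀ + ∫ u in τ₀..(cl c d t), v (cl c d u) (B (cl c d u)) := by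
      intro t'
      have hy : cl c d t' ∈ Icc c d := cl_mem h.hcd t'
      have hyy : cl c d t' ∈ Icc c' d' := ⟨le_trans hcc hy.1, le_trans hy.2 hdd⟩
      rw [hBeq, hsol c' d' h' (cl c d t'), cl_of_mem hyy]
      congr 1
      apply intervalIntegral.integral_congr
      intro u hu
      have hu1 : u ∈ Icc c d := uIcc_subset_Icc' h.tau_mem hy hu
      have hu2 : u ∈ Icc c' d' := ⟨le_trans hcc hu1.1, le_trans hu1.2 hdd⟩
      simp only [cl_of_mem hu1, cl_of_mem hu2, hBeq]
    rw [← huniq c d h B hB, hBeq, cl_of_mem htI]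
  set A : ℝ → F := fun t =>
    if h : t ∈ Ioo a b then
      sol ((a + min t τ₀) / 2) ((max t τ₀ + b) / 2) (adm_cc_dd hτ h) t
    else p₀ with hAdef
  have hA : ∀ c d (h : adm a b τ₀ c d), ∀ t ∈ Icc c d, A t = sol c d h t := by
    intro c d h t htI
    have ht : t ∈ Ioo a b := h.subset htI
    have h2 := adm_cc_dd hτ ht
    have htI2 : t ∈ Icc ((a + min t τ₀) / 2) ((max t τ₀ + b) / 2) :=
      Ioo_subset_Icc_self (mem_Ioo_cc_dd hτ ht)
    have hU : adm a b τ₀ (min c ((a + min t τ₀) / 2)) (max d ((max t τ₀ + b) / 2)) :=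
      ⟨lt_min h.1 h2.1, le_trans (min_le_left _ _) h.2.1,
        le_trans h.2.2.1 (le_max_left _ _), max_lt h.2.2.2 h2.2.2.2⟩
    have e1 := agree ((a + min t τ₀) / 2) ((max t τ₀ + b) / 2) h2 _ _ hU
      (min_le_right _ _) (le_max_right _ _) t htI2
    have e2 := agree c d h _ _ hU
      (min_le_left _ _) (le_max_left _ _) t htI
    simp only [hAdef, dif_pos ht]
    rw [e1, ← e2]
  have hAeq : ∀ t ∈ Ioo a b, A t = p₀ + ∫ u in τ₀..t, v u (A u) := by
    intro t ht
    have h := adm_cc_dd hτ ht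
    have htI : t ∈ Icc ((a + min t τ₀) / 2) ((max t τ₀ + b) / 2) :=
      Ioo_subset_Icc_self (mem_Ioo_cc_dd hτ ht)
    rw [hA _ _ h t htI, hsol _ _ h t, cl_of_mem htI]
    congr 1
    apply intervalIntegral.integral_congr
    intro u hu
    have huI : u ∈ Icc ((a + min t τ₀) / 2) ((max t τ₀ + b) / 2) :=
      uIcc_subset_Icc' h.tau_mem htI hu
    simp only [cl_of_mem huI, ← hA _ _ h u huI]
  have hAc : ContinuousOn A (Ioo a b) := by
    intro t ht
    apply ContinuousAt.continuousWithinAt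
    have h := adm_cc_dd hτ ht
    have hopen : Ioo ((a + min t τ₀) / 2) ((max t τ₀ + b) / 2) ∈ nhds t :=
      Ioo_mem_nhds (mem_Ioo_cc_dd hτ ht).1 (mem_Ioo_cc_dd hτ ht).2
    have hEq : ∀ u ∈ Ioo ((a + min t τ₀) / 2) ((max t τ₀ + b) / 2),
        A u = sol _ _ h u :=
      fun u hu => hA _ _ h u (Ioo_subset_Icc_self hu)
    exact ((sol _ _ h).continuous.continuousAt).congr
      (Filter.eventuallyEq_of_mem hopen hEq).symm
  have hint_cont : ContinuousOn (fun u => v u (A u)) (Ioo a b) := by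
    have hpair : ContinuousOn (fun u => ((u, A u) : ℝ × F)) (Ioo a b) :=
      continuousOn_id.prodMk hAc
    exact hv.comp hpair fun u hu => ⟨hu, mem_univ _⟩
  refine ⟨A, ?_, ?_⟩
  · rw [hAeq τ₀ hτ, intervalIntegral.integral_same, add_zero]
  · intro t ht
    have hmeas := ContinuousOn.stronglyMeasurableAtFilter (μ := volume) isOpen_Ioo hint_cont t ht
    have hci : IntervalIntegrable (fun u => v u (A u)) volume τ₀ t :=
      (hint_cont.mono (uIcc_subset_Ioo' hτ ht)).intervalIntegrable
    have hca : ContinuousAt (fun u => v u (A u)) t :=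
      hint_cont.continuousAt (isOpen_Ioo.mem_nhds ht)
    have hprim : HasDerivAt (fun y => p₀ + ∫ u in τ₀..y, v u (A u)) (v t (A t)) t :=
      (intervalIntegral.integral_hasDerivAt_right hci hmeas hca).const_add p₀
    exact hprim.congr_of_eventuallyEq
      (Filter.eventuallyEq_of_mem (isOpen_Ioo.mem_nhds ht) hAeq)

theorem ode_unique (a b τ₀ : ℝ) (hτ : τ₀ ∈ Ioo a b) (v : ℝ → F → F)
    (hv : ContinuousOn (fun p : ℝ × F => v p.1 p.2) (Ioo a b ×ˢ univ))
    (hlip : ∀ c d, a < c → d < b → ∃ K : ℝ≥0, ∀ t ∈ Icc c d, LipschitzWith K (v t))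
    (f g : ℝ → F)
    (hf : ∀ t ∈ Ioo a b, HasDerivAt f (v t (f t)) t)
    (hg : ∀ t ∈ Ioo a b, HasDerivAt g (v t (g t)) t)
    (heq : f τ₀ = g τ₀) : Set.EqOn f g (Set.Ioo a b) := by
  intro t ht
  have h : adm a b τ₀ ((a + min t τ₀) / 2) ((max t τ₀ + b) / 2) := adm_cc_dd hτ ht
  set c := (a + min t τ₀) / 2
  set d := (max t τ₀ + b) / 2
  have htI : t ∈ Icc c d := Ioo_subset_Icc_self (mem_Ioo_cc_dd hτ ht)
  obtain ⟨K, hK⟩ := hlip c d h.1 h.2.2.2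
  have main := existsUnique_fix v c d τ₀ h.tau_mem
    (hv.mono (Set.prod_mono h.subset (subset_refl _))) K hK (f τ₀)
  have mk : ∀ F₁ : ℝ → F, (∀ u ∈ Ioo a b, HasDerivAt F₁ (v u (F₁ u)) u) → F₁ τ₀ = f τ₀ →
      ∃ B : BoundedContinuousFunction ℝ F, (∀ u : ℝ, B u = F₁ (cl c d u)) ∧
        ∀ t' : ℝ, B t' = f τ₀ + ∫ u in τ₀..(cl c d t'), v (cl c d u) (B (cl c d u)) := by
    intro F₁ hF₁ hF₁0
    have hFc : ContinuousOn F₁ (Ioo a b) :=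
      fun u hu => (hF₁ u hu).continuousAt.continuousWithinAt
    have hicont : ContinuousOn (fun u => v u (F₁ u)) (Ioo a b) := by
      have hpair : ContinuousOn (fun u => ((u, F₁ u) : ℝ × F)) (Ioo a b) :=
        continuousOn_id.prodMk hFc
      exact hv.comp hpair fun u hu => ⟨hu, mem_univ _⟩
    have hBc : Continuous fun u => F₁ (cl c d u) :=
      (hFc.mono h.subset).comp_continuous (continuous_cl c d) fun u => cl_mem h.hcd u
    obtain ⟨C, hC⟩ :=
      isCompact_Icc.exists_bound_of_continuousOn (s := Icc c d) (hFc.mono h.subset)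
    have hBb : ∀ u : ℝ, ‖F₁ (cl c d u)‖ ≤ C := fun u => hC _ (cl_mem h.hcd u)
    refine ⟨BoundedContinuousFunction.ofNormedAddCommGroup _ hBc C hBb, fun u => rfl, ?_⟩
    intro t'
    have hy : cl c d t' ∈ Icc c d := cl_mem h.hcd t'
    have hFTC : F₁ (cl c d t') = F₁ τ₀ + ∫ u in τ₀..(cl c d t'), v u (F₁ u) := by
      have hsub2 : uIcc τ₀ (cl c d t') ⊆ Ioo a b :=
        subset_trans (uIcc_subset_Icc' h.tau_mem hy) h.subset
      have hderiv : ∀ x ∈ uIcc τ₀ (cl c d t'), HasDerivAt F₁ (v x (F₁ x)) x :=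
        fun x hx => hF₁ x (hsub2 hx)
      have hint : IntervalIntegrable (fun u => v u (F₁ u)) volume τ₀ (cl c d t') :=
        (hicont.mono hsub2).intervalIntegrable
      have := intervalIntegral.integral_eq_sub_of_hasDerivAt hderiv hint
      rw [this]
      abel
    show F₁ (cl c d t') = f τ₀ + ∫ u in τ₀..(cl c d t'), v (cl c d u) (F₁ (cl c d (cl c d u)))
    rw [hFTC, hF₁0]
    congr 1
    apply intervalIntegral.integral_congr
    intro u hu
    have huI : u ∈ Icc c d := uIcc_subset_Icc' h.tau_mem hy hu
    simp only [cl_of_mem huI]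
  obtain ⟨Bf, hBf1, hBf2⟩ := mk f hf rfl
  obtain ⟨Bg, hBg1, hBg2⟩ := mk g hg heq.symm
  have hBfg : Bf = Bg := main.unique hBf2 hBg2
  have : f (cl c d t) = g (cl c d t) := by
    rw [← hBf1, ← hBg1, hBfg]
  rwa [cl_of_mem htI] at this


end ODE

section Jacobi

variable {n : ℕ}

local notation "Mn" => Matrix (Fin n) (Fin n) ℝ

lemma wronskian_const {a b : ℝ} {R X Y X' Y' : ℝ → Mn}
    (hRs : ∀ t ∈ Set.Ioo a b, (R t).IsSymm)
    (hX : ∀ t ∈ Set.Ioo a b, HasDerivAt X (X' t) t)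
    (hX' : ∀ t ∈ Set.Ioo a b, HasDerivAt X' (-(R t * X t)) t)
    (hY : ∀ t ∈ Set.Ioo a b, HasDerivAt Y (Y' t) t)
    (hY' : ∀ t ∈ Set.Ioo a b, HasDerivAt Y' (-(R t * Y t)) t)
    {t u : ℝ} (ht : t ∈ Set.Ioo a b) (hu : u ∈ Set.Ioo a b) :
    (X' t)ᵀ * Y t - (X t)ᵀ * Y' t = (X' u)ᵀ * Y u - (X u)ᵀ * Y' u := by
  have hW : ∀ r ∈ Set.Ioo a b,
      HasDerivAt (fun w => (X' w)ᵀ * Y w - (X w)ᵀ * Y' w) 0 r := by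
    intro r hr
    have h1 := ((hX' r hr).mtrans.matmul (hY r hr)).sub
      ((hX r hr).mtrans.matmul (hY' r hr))
    have hsymm : (R r)ᵀ = R r := hRs r hr
    have e : (-(R r * X r))ᵀ * Y r + (X' r)ᵀ * Y' r - ((X' r)ᵀ * Y' r + (X r)ᵀ * -(R r * Y r)) = 0 := by
      rw [Matrix.transpose_neg, Matrix.transpose_mul, hsymm]
      noncomm_ring
    rw [e] at h1
    exact h1
  have h0 := intervalIntegral.integral_eq_sub_of_hasDerivAt
    (f' := fun _ : ℝ => (0 : Mn))
    (fun x hx => hW x (uIcc_subset_Ioo' ht hu hx))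
    (intervalIntegrable_const)
  rw [intervalIntegral.integral_zero] at h0
  have := sub_eq_zero.mp h0.symm
  exact this.symm

lemma formula_lemma {a b t₁ s : ℝ} {R J X X' : ℝ → Mn}
    (hat₁ : a < t₁)
    (hRs : ∀ t ∈ Set.Ioo a b, (R t).IsSymm)
    (hJd : ∀ t ∈ Set.Ioo a b, HasDerivAt J (deriv J t) t)
    (hJd' : ∀ t ∈ Set.Ioo a b, HasDerivAt (deriv J) (-(R t * J t)) t)
    (hJt₁ : J t₁ = 0) (hJ't₁ : deriv J t₁ = 1)
    (hJinv : ∀ t ∈ Set.Ioo t₁ b, IsUnit (J t))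
    (ht₁ : t₁ ∈ Set.Ioo a b) (hs : s ∈ Set.Ioo t₁ b)
    (hX : ∀ t ∈ Set.Ioo a b, HasDerivAt X (X' t) t)
    (hX' : ∀ t ∈ Set.Ioo a b, HasDerivAt X' (-(R t * X t)) t)
    (hX1 : X t₁ = 1) (hXs : X s = 0) :
    ∀ t ∈ Set.Ioo t₁ b, X t = J t * ∫ r in t..s, ((J r)ᵀ * J r)⁻¹ := by
  have hsubIoo : Set.Ioo t₁ b ⊆ Set.Ioo a b := fun x hx => ⟨hat₁.trans hx.1, hx.2⟩
  have hdet : ∀ r ∈ Set.Ioo t₁ b, IsUnit (J r).det :=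
    fun r hr => (Matrix.isUnit_iff_isUnit_det _).mp (hJinv r hr)
  have hdetT : ∀ r ∈ Set.Ioo t₁ b, IsUnit ((J r)ᵀ).det := by
    intro r hr
    rw [Matrix.det_transpose]
    exact hdet r hr
  have hW : ∀ t ∈ Set.Ioo a b, (deriv J t)ᵀ * X t - (J t)ᵀ * X' t = 1 := by
    intro t ht
    have h := wronskian_const hRs hJd hJd' hX hX' ht ht₁
    rw [h, hJ't₁, hJt₁, hX1, Matrix.transpose_one, one_mul, Matrix.transpose_zero,
      Matrix.zero_mul, sub_zero]
  have hsymmJ : ∀ t ∈ Set.Ioo a b, (deriv J t)ᵀ * J t = (J t)ᵀ * deriv J t := by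
    intro t ht
    have h := wronskian_const hRs hJd hJd' hJd hJd' ht ht₁
    rw [hJt₁] at h
    simp only [Matrix.mul_zero, Matrix.zero_mul, sub_zero, zero_sub,
      Matrix.transpose_zero] at h
    have h' : (deriv J t)ᵀ * J t - (J t)ᵀ * deriv J t = 0 := by simpa using h
    exact sub_eq_zero.mp h'
  have hUdiff : ∀ r ∈ Set.Ioo t₁ b, DifferentiableAt ℝ (fun w => (J w)⁻¹) r := fun r hr =>
    differentiableAt_inv_matrix (hJd r (hsubIoo hr)).differentiableAt (hJinv r hr)
  have hZunit : ∀ r ∈ Set.Ioo t₁ b, IsUnit ((J r)ᵀ * J r) := by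
    intro r hr
    rw [Matrix.isUnit_iff_isUnit_det, Matrix.det_mul, Matrix.det_transpose]
    exact (hdet r hr).mul (hdet r hr)
  have hZdiff : ∀ r ∈ Set.Ioo t₁ b, DifferentiableAt ℝ (fun w => ((J w)ᵀ * J w)⁻¹) r := by
    intro r hr
    exact differentiableAt_inv_matrix
      ((hJd r (hsubIoo hr)).mtrans.matmul (hJd r (hsubIoo hr))).differentiableAt
      (hZunit r hr)
  have hZcont : ContinuousOn (fun w => ((J w)ᵀ * J w)⁻¹) (Set.Ioo t₁ b) :=
    fun r hr => ((hZdiff r hr).continuousAt).continuousWithinAt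
  have hGd : ∀ r ∈ Set.Ioo t₁ b,
      HasDerivAt (fun w => (J w)⁻¹ * X w) (-((J r)ᵀ * J r)⁻¹) r := by
    intro r hr
    have hr' := hsubIoo hr
    have hU : HasDerivAt (fun w => (J w)⁻¹) (deriv (fun w => (J w)⁻¹) r) r :=
      (hUdiff r hr).hasDerivAt
    set U' := deriv (fun w => (J w)⁻¹) r with hU'def
    have hprod : HasDerivAt (fun w => (J w)⁻¹ * J w)
        (U' * J r + (J r)⁻¹ * deriv J r) r := hU.matmul (hJd r hr')
    have hone : HasDerivAt (fun w : ℝ => (J w)⁻¹ * J w) 0 r := by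
      have hev : (fun w : ℝ => (J w)⁻¹ * J w) =ᶠ[nhds r] (fun _ => (1 : Mn)) := by
        apply Filter.eventuallyEq_of_mem (isOpen_Ioo.mem_nhds hr)
        intro x hx
        exact Matrix.nonsing_inv_mul _ (hdet x hx)
      exact (hasDerivAt_const r (1 : Mn)).congr_of_eventuallyEq hev
    have hzero : U' * J r + (J r)⁻¹ * deriv J r = 0 := hprod.unique hone
    have h1 : U' * J r = -((J r)⁻¹ * deriv J r) := eq_neg_of_add_eq_zero_left hzero
    have hU'eq : U' = -((J r)⁻¹ * deriv J r * (J r)⁻¹) := by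
      calc U' = U' * (J r * (J r)⁻¹) := by rw [Matrix.mul_nonsing_inv _ (hdet r hr), mul_one]
        _ = U' * J r * (J r)⁻¹ := by rw [Matrix.mul_assoc]
        _ = -((J r)⁻¹ * deriv J r) * (J r)⁻¹ := by rw [h1]
        _ = -((J r)⁻¹ * deriv J r * (J r)⁻¹) := by rw [Matrix.neg_mul]
    have hG := hU.matmul (hX r hr')
    convert hG using 1
    -- algebra: -((JᵀJ)⁻¹) = U' * X r + (J r)⁻¹ * X' r
    have hX'eq : X' r = ((J r)ᵀ)⁻¹ * ((deriv J r)ᵀ * X r) - ((J r)ᵀ)⁻¹ := by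
      have hw := hW r hr'
      have h2 : (J r)ᵀ * X' r = (deriv J r)ᵀ * X r - 1 := by
        calc (J r)ᵀ * X' r
            = (deriv J r)ᵀ * X r - ((deriv J r)ᵀ * X r - (J r)ᵀ * X' r) := by abel
          _ = (deriv J r)ᵀ * X r - 1 := by rw [hw]
      calc X' r = ((J r)ᵀ)⁻¹ * (J r)ᵀ * X' r := by
            rw [Matrix.nonsing_inv_mul _ (hdetT r hr), one_mul]
        _ = ((J r)ᵀ)⁻¹ * ((J r)ᵀ * X' r) := by rw [Matrix.mul_assoc]
        _ = ((J r)ᵀ)⁻¹ * ((deriv J r)ᵀ * X r - 1) := by rw [h2]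
        _ = ((J r)ᵀ)⁻¹ * ((deriv J r)ᵀ * X r) - ((J r)ᵀ)⁻¹ := by
            rw [Matrix.mul_sub, mul_one]
    have hVJp : ((J r)ᵀ)⁻¹ * (deriv J r)ᵀ = deriv J r * (J r)⁻¹ := by
      calc ((J r)ᵀ)⁻¹ * (deriv J r)ᵀ
          = ((J r)ᵀ)⁻¹ * (deriv J r)ᵀ * (J r * (J r)⁻¹) := by
            rw [Matrix.mul_nonsing_inv _ (hdet r hr), mul_one]
        _ = ((J r)ᵀ)⁻¹ * ((deriv J r)ᵀ * J r) * (J r)⁻¹ := by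
            simp only [Matrix.mul_assoc]
        _ = ((J r)ᵀ)⁻¹ * ((J r)ᵀ * deriv J r) * (J r)⁻¹ := by rw [hsymmJ r hr']
        _ = (((J r)ᵀ)⁻¹ * (J r)ᵀ) * deriv J r * (J r)⁻¹ := by
            simp only [Matrix.mul_assoc]
        _ = deriv J r * (J r)⁻¹ := by
            rw [Matrix.nonsing_inv_mul _ (hdetT r hr), one_mul]
    rw [hU'eq, hX'eq, Matrix.mul_inv_rev, Matrix.mul_sub,
      ← Matrix.mul_assoc (((J r)ᵀ)⁻¹) ((deriv J r)ᵀ) (X r), hVJp]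
    simp only [Matrix.neg_mul, Matrix.mul_assoc]
    abel
  intro t ht
  have hts : Set.uIcc t s ⊆ Set.Ioo t₁ b := uIcc_subset_Ioo' ht hs
  have hint :=
    ((hZcont.mono hts).neg).intervalIntegrable (μ := volume)
  have h0 := intervalIntegral.integral_eq_sub_of_hasDerivAt
    (f' := fun w => -(((J w)ᵀ * J w)⁻¹)) (fun x hx => hGd x (hts hx)) hint
  rw [intervalIntegral.integral_neg, hXs, Matrix.mul_zero, zero_sub, neg_inj] at h0
  calc X t = (J t * (J t)⁻¹) * X t := by
        rw [Matrix.mul_nonsing_inv _ (hdet t ht), one_mul]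
    _ = J t * ((J t)⁻¹ * X t) := by rw [Matrix.mul_assoc]
    _ = J t * ∫ r in t..s, ((J r)ᵀ * J r)⁻¹ := by rw [h0]

end Jacobi

end JacobiAux

end JacobiAuxSection

/-- Lemma 7.4, Lorentz–Finsler version of Beem–Ehrlich–Easley
Lemma 12.12. Let `J` solve `J'' + R·J = 0` with `J(t₁) = 0`, `J'(t₁) = Iₙ`, and be
invertible on `(t₁,b)`. For fixed `s ∈ (t₁,b)` there is a unique `C²` solution `D`
of `D'' + R·D = 0` with `D(t₁) = Iₙ`, `D(s) = 0`; on `(t₁,b)` it is given by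
`D(t) = J(t)·∫ₜˢ (JᵀJ)⁻¹(r) dr`, and `D(t)` is invertible for `t ∈ (t₁,s)`. -/
theorem lagrange_tensor_Ds (n : ℕ) (hn : 1 ≤ n) (a b t₁ : ℝ)
    (hat₁ : a < t₁) (ht₁b : t₁ < b)
    (R : ℝ → Matrix (Fin n) (Fin n) ℝ)
    (hR : ContDiffOn ℝ (⊤ : ℕ∞) R (Set.Ioo a b))
    (hRsymm : ∀ t ∈ Set.Ioo a b, (R t).IsSymm)
    (J : ℝ → Matrix (Fin n) (Fin n) ℝ)
    (hJsol : IsC2JacobiSol n a b R J)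
    (hJt₁ : J t₁ = 0) (hJ't₁ : deriv J t₁ = 1)
    (hJinv : ∀ t ∈ Set.Ioo t₁ b, IsUnit (J t))
    (s : ℝ) (hs : s ∈ Set.Ioo t₁ b) :
    ∃ D : ℝ → Matrix (Fin n) (Fin n) ℝ,
      (IsC2JacobiSol n a b R D ∧ D t₁ = 1 ∧ D s = 0) ∧
      (∀ D₂ : ℝ → Matrix (Fin n) (Fin n) ℝ,
        IsC2JacobiSol n a b R D₂ → D₂ t₁ = 1 → D₂ s = 0 →
        Set.EqOn D₂ D (Set.Ioo a b)) ∧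
      (∀ t ∈ Set.Ioo t₁ b, D t = J t * ∫ r in t..s, ((J r)ᵀ * J r)⁻¹) ∧
      (∀ t ∈ Set.Ioo t₁ s, IsUnit (D t)) := by
  classical
  have hs1 : t₁ < s := hs.1
  have hs2 : s < b := hs.2
  have ht₁ : t₁ ∈ Set.Ioo a b := ⟨hat₁, ht₁b⟩
  have hsab : s ∈ Set.Ioo a b := ⟨hat₁.trans hs1, hs2⟩
  have hsubIoo : Set.Ioo t₁ b ⊆ Set.Ioo a b := fun x hx => ⟨hat₁.trans hx.1, hx.2⟩
  obtain ⟨hJ1, hJ2, hJ3, hJ4⟩ := hJsol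
  have hJd : ∀ t ∈ Set.Ioo a b, HasDerivAt J (deriv J t) t := fun t ht => (hJ1 t ht).hasDerivAt
  have hJ'' : ∀ t ∈ Set.Ioo a b, deriv (deriv J) t = -(R t * J t) :=
    fun t ht => eq_neg_of_add_eq_zero_left (hJ4 t ht)
  have hJd2 : ∀ t ∈ Set.Ioo a b, HasDerivAt (deriv J) (-(R t * J t)) t := by
    intro t ht
    have h : HasDerivAt (deriv J) (deriv (deriv J) t) t := (hJ2 t ht).hasDerivAt
    rwa [hJ'' t ht] at h
  have hRc : ContinuousOn R (Set.Ioo a b) := hR.continuousOn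
  -- the first-order vector field on pairs
  set v : ℝ → (Matrix (Fin n) (Fin n) ℝ × Matrix (Fin n) (Fin n) ℝ) →
      (Matrix (Fin n) (Fin n) ℝ × Matrix (Fin n) (Fin n) ℝ) :=
    fun t p => (p.2, -(R t * p.1)) with hvdef
  have hv : ContinuousOn
      (fun p : ℝ × (Matrix (Fin n) (Fin n) ℝ × Matrix (Fin n) (Fin n) ℝ) => v p.1 p.2)
      (Set.Ioo a b ×ˢ Set.univ) := by
    apply ContinuousOn.prodMk
    · exact (continuous_snd.comp continuous_snd).continuousOn
    · apply ContinuousOn.neg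
      have hRp : ContinuousOn
          (fun p : ℝ × (Matrix (Fin n) (Fin n) ℝ × Matrix (Fin n) (Fin n) ℝ) => R p.1)
          (Set.Ioo a b ×ˢ Set.univ) :=
        hRc.comp continuous_fst.continuousOn fun p hp => hp.1
      exact hRp.matmul' ((continuous_fst.comp continuous_snd).continuousOn)
  have hlip : ∀ c d, a < c → d < b → ∃ K : NNReal,
      ∀ t ∈ Set.Icc c d, LipschitzWith K (v t) := by
    intro c d hc hd
    rcases le_or_gt c d with hcd | hcd
    swap
    · exact ⟨1, fun t ht => absurd (le_trans ht.1 ht.2) (not_le.2 hcd)⟩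
    have hsub : Set.Icc c d ⊆ Set.Ioo a b :=
      fun x hx => ⟨lt_of_lt_of_le hc hx.1, lt_of_le_of_lt hx.2 hd⟩
    obtain ⟨C, hC⟩ := isCompact_Icc.exists_bound_of_continuousOn (hRc.mono hsub)
    refine ⟨Real.toNNReal (max 1 ((n : ℝ) * C)), fun t ht => ?_⟩
    have hC0 : 0 ≤ C := le_trans (norm_nonneg _) (hC t ht)
    apply LipschitzWith.of_dist_le_mul
    intro p q
    rw [Real.coe_toNNReal _ (le_trans zero_le_one (le_max_left _ _))]
    have hd1 : dist (v t p).1 (v t q).1 ≤ max 1 ((n : ℝ) * C) * dist p q := by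
      have h1 : dist (v t p).1 (v t q).1 = dist p.2 q.2 := rfl
      rw [h1]
      calc dist p.2 q.2 ≤ dist p q := by rw [Prod.dist_eq]; exact le_max_right _ _
        _ ≤ max 1 ((n : ℝ) * C) * dist p q := by
            nlinarith [dist_nonneg (x := p) (y := q), le_max_left (1 : ℝ) ((n : ℝ) * C)]
    have hd2 : dist (v t p).2 (v t q).2 ≤ max 1 ((n : ℝ) * C) * dist p q := by
      have h2 : dist (v t p).2 (v t q).2 = ‖R t * (p.1 - q.1)‖ := by
        show dist (-(R t * p.1)) (-(R t * q.1)) = _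
        rw [dist_neg_neg, dist_eq_norm, ← Matrix.mul_sub]
      rw [h2]
      calc ‖R t * (p.1 - q.1)‖ ≤ (n : ℝ) * ‖R t‖ * ‖p.1 - q.1‖ := JacobiAux.norm_matmul_le _ _
        _ ≤ (n : ℝ) * C * dist p q := by
            have hb1 : ‖R t‖ ≤ C := hC t ht
            have hb2 : ‖p.1 - q.1‖ ≤ dist p q := by
              rw [← dist_eq_norm, Prod.dist_eq]
              exact le_max_left _ _
            have hn0 : (0 : ℝ) ≤ (n : ℝ) := Nat.cast_nonneg n
            exact mul_le_mul (mul_le_mul_of_nonneg_left hb1 hn0) hb2 (norm_nonneg _)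
              (mul_nonneg hn0 hC0)
        _ ≤ max 1 ((n : ℝ) * C) * dist p q := by
            have := le_max_right (1 : ℝ) ((n : ℝ) * C)
            nlinarith [dist_nonneg (x := p) (y := q)]
    calc dist (v t p) (v t q) = max (dist (v t p).1 (v t q).1) (dist (v t p).2 (v t q).2) :=
          Prod.dist_eq
      _ ≤ max 1 ((n : ℝ) * C) * dist p q := max_le hd1 hd2
  -- solve the ODE with data (1, 0) at t₁
  obtain ⟨A, hA0, hAd⟩ := JacobiAux.ode_exists a b t₁ ht₁ v hv hlip (1, 0)
  set P : ℝ → Matrix (Fin n) (Fin n) ℝ := fun t => (A t).1 with hPdef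
  set Q : ℝ → Matrix (Fin n) (Fin n) ℝ := fun t => (A t).2 with hQdef
  have hP : ∀ t ∈ Set.Ioo a b, HasDerivAt P (Q t) t := by
    intro t ht
    have h := (ContinuousLinearMap.fst ℝ (Matrix (Fin n) (Fin n) ℝ)
      (Matrix (Fin n) (Fin n) ℝ)).hasFDerivAt.comp_hasDerivAt t (hAd t ht)
    exact h
  have hQ : ∀ t ∈ Set.Ioo a b, HasDerivAt Q (-(R t * P t)) t := by
    intro t ht
    have h := (ContinuousLinearMap.snd ℝ (Matrix (Fin n) (Fin n) ℝ)
      (Matrix (Fin n) (Fin n) ℝ)).hasFDerivAt.comp_hasDerivAt t (hAd t ht)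
    exact h
  have hP0 : P t₁ = 1 := by show (A t₁).1 = 1; rw [hA0]
  set Cm : Matrix (Fin n) (Fin n) ℝ := (J s)⁻¹ * P s with hCm
  set D : ℝ → Matrix (Fin n) (Fin n) ℝ := fun t => P t - J t * Cm with hDdef
  set D' : ℝ → Matrix (Fin n) (Fin n) ℝ := fun t => Q t - deriv J t * Cm with hD'def
  have hDd : ∀ t ∈ Set.Ioo a b, HasDerivAt D (D' t) t := by
    intro t ht
    have h2 : HasDerivAt (fun u => J u * Cm) (deriv J t * Cm) t := by
      simpa using (hJd t ht).matmul (hasDerivAt_const t Cm)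
    exact (hP t ht).sub h2
  have hDd' : ∀ t ∈ Set.Ioo a b, HasDerivAt D' (-(R t * D t)) t := by
    intro t ht
    have h2 : HasDerivAt (fun u => deriv J u * Cm) (-(R t * J t) * Cm) t := by
      simpa using (hJd2 t ht).matmul (hasDerivAt_const t Cm)
    have h3 := (hQ t ht).sub h2
    have e : -(R t * D t) = -(R t * P t) - -(R t * J t) * Cm := by
      rw [hDdef]
      simp only [Matrix.mul_sub, Matrix.neg_mul, ← Matrix.mul_assoc]
      abel
    rw [e]
    exact h3
  have hDt₁ : D t₁ = 1 := by
    rw [hDdef]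
    simp only [hJt₁, Matrix.zero_mul, sub_zero, hP0]
  have hDs : D s = 0 := by
    have hdets := (Matrix.isUnit_iff_isUnit_det _).mp (hJinv s hs)
    rw [hDdef]
    simp only [hCm]
    rw [← Matrix.mul_assoc, Matrix.mul_nonsing_inv _ hdets, one_mul, sub_self]
  have hderivD : ∀ t ∈ Set.Ioo a b, deriv D t = D' t := fun t ht => (hDd t ht).deriv
  have hDd2 : ∀ t ∈ Set.Ioo a b, HasDerivAt (deriv D) (-(R t * D t)) t := by
    intro t ht
    apply (hDd' t ht).congr_of_eventuallyEq
    exact Filter.eventuallyEq_of_mem (isOpen_Ioo.mem_nhds ht) hderivD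
  have hderiv2D : ∀ t ∈ Set.Ioo a b, deriv (deriv D) t = -(R t * D t) :=
    fun t ht => (hDd2 t ht).deriv
  have hDcont : ContinuousOn D (Set.Ioo a b) :=
    fun t ht => (hDd t ht).differentiableAt.continuousAt.continuousWithinAt
  have hDsol : IsC2JacobiSol n a b R D := by
    refine ⟨fun t ht => (hDd t ht).differentiableAt,
      fun t ht => (hDd2 t ht).differentiableAt, ?_, ?_⟩
    · exact ((hRc.matmul' hDcont).neg).congr hderiv2D
    · intro t ht
      rw [hderiv2D t ht]
      simp
  have hformula := JacobiAux.formula_lemma hat₁ hRsymm hJd hJd2 hJt₁ hJ't₁ hJinv ht₁ hs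
    hDd hDd' hDt₁ hDs
  refine ⟨D, ⟨hDsol, hDt₁, hDs⟩, ?_, hformula, ?_⟩
  · -- uniqueness
    intro D₂ hD₂sol hD₂t₁ hD₂s
    obtain ⟨h21, h22, _h23, h24⟩ := hD₂sol
    have hD₂d : ∀ t ∈ Set.Ioo a b, HasDerivAt D₂ (deriv D₂ t) t :=
      fun t ht => (h21 t ht).hasDerivAt
    have hD₂d2 : ∀ t ∈ Set.Ioo a b, HasDerivAt (deriv D₂) (-(R t * D₂ t)) t := by
      intro t ht
      have h : HasDerivAt (deriv D₂) (deriv (deriv D₂) t) t := (h22 t ht).hasDerivAt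
      rwa [eq_neg_of_add_eq_zero_left (h24 t ht)] at h
    have hform2 := JacobiAux.formula_lemma hat₁ hRsymm hJd hJd2 hJt₁ hJ't₁ hJinv ht₁ hs
      hD₂d hD₂d2 hD₂t₁ hD₂s
    have hEqtb : Set.EqOn D₂ D (Set.Ioo t₁ b) := by
      intro t ht
      rw [hform2 t ht, hformula t ht]
    have hEv : D₂ =ᶠ[nhds s] D :=
      Filter.eventuallyEq_of_mem (isOpen_Ioo.mem_nhds hs) hEqtb
    have hds : deriv D₂ s = D' s := hEv.deriv_eq.trans (hderivD s hsab)
    have hpair2 : ∀ t ∈ Set.Ioo a b,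
        HasDerivAt (fun u => ((D₂ u, deriv D₂ u) :
          Matrix (Fin n) (Fin n) ℝ × Matrix (Fin n) (Fin n) ℝ))
          (v t (D₂ t, deriv D₂ t)) t :=
      fun t ht => (hD₂d t ht).prodMk (hD₂d2 t ht)
    have hpair1 : ∀ t ∈ Set.Ioo a b,
        HasDerivAt (fun u => ((D u, D' u) :
          Matrix (Fin n) (Fin n) ℝ × Matrix (Fin n) (Fin n) ℝ))
          (v t (D t, D' t)) t :=
      fun t ht => (hDd t ht).prodMk (hDd' t ht)
    have heqs : ((D₂ s, deriv D₂ s) :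
        Matrix (Fin n) (Fin n) ℝ × Matrix (Fin n) (Fin n) ℝ) = (D s, D' s) := by
      rw [hD₂s, hDs, hds]
    have huni := JacobiAux.ode_unique a b s hsab v hv hlip
      (fun u => (D₂ u, deriv D₂ u)) (fun u => (D u, D' u)) hpair2 hpair1 heqs
    intro t ht
    exact congrArg Prod.fst (huni ht)
  · -- invertibility on (t₁, s)
    intro t ht
    have htb : t ∈ Set.Ioo t₁ b := ⟨ht.1, ht.2.trans hs2⟩
    have hdet : ∀ r ∈ Set.Ioo t₁ b, IsUnit (J r).det :=
      fun r hr => (Matrix.isUnit_iff_isUnit_det _).mp (hJinv r hr)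
    have hZunit : ∀ r ∈ Set.Ioo t₁ b, IsUnit ((J r)ᵀ * J r) := by
      intro r hr
      rw [Matrix.isUnit_iff_isUnit_det, Matrix.det_mul, Matrix.det_transpose]
      exact (hdet r hr).mul (hdet r hr)
    have hZdiff : ∀ r ∈ Set.Ioo t₁ b,
        DifferentiableAt ℝ (fun w => ((J w)ᵀ * J w)⁻¹) r := by
      intro r hr
      exact JacobiAux.differentiableAt_inv_matrix
        ((hJd r (hsubIoo hr)).mtrans.matmul (hJd r (hsubIoo hr))).differentiableAt
        (hZunit r hr)
    have hZcont : ContinuousOn (fun w => ((J w)ᵀ * J w)⁻¹) (Set.Ioo t₁ b) :=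
      fun r hr => ((hZdiff r hr).continuousAt).continuousWithinAt
    have hts : Set.uIcc t s ⊆ Set.Ioo t₁ b := JacobiAux.uIcc_subset_Ioo' htb hs
    have hint :=
      (hZcont.mono hts).intervalIntegrable (μ := volume)
    rw [hformula t htb]
    apply (hJinv t htb).mul
    rw [Matrix.isUnit_iff_isUnit_det, isUnit_iff_ne_zero]
    intro hdet0
    obtain ⟨x, hx0, hxZ⟩ := Matrix.exists_mulVec_eq_zero_iff.mpr hdet0
    set L : Matrix (Fin n) (Fin n) ℝ →L[ℝ] ℝ := LinearMap.toContinuousLinearMap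
      { toFun := fun M : Matrix (Fin n) (Fin n) ℝ => x ⬝ᵥ (M *ᵥ x)
        map_add' := fun M N => by simp [Matrix.add_mulVec, dotProduct_add]
        map_smul' := fun c M => by
          simp [Matrix.smul_mulVec, dotProduct_smul] } with hLdef
    have hLapp : ∀ M : Matrix (Fin n) (Fin n) ℝ, L M = x ⬝ᵥ (M *ᵥ x) := fun M => rfl
    have hLint := L.intervalIntegral_comp_comm hint
    have hposint : 0 < ∫ r in t..s, x ⬝ᵥ (((J r)ᵀ * J r)⁻¹ *ᵥ x) := by
      apply intervalIntegral.intervalIntegral_pos_of_pos_on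
      · have hcont2 : ContinuousOn (fun r => x ⬝ᵥ (((J r)ᵀ * J r)⁻¹ *ᵥ x)) (Set.uIcc t s) := by
          have := L.continuous.comp_continuousOn (hZcont.mono hts)
          exact this
        exact hcont2.intervalIntegrable
      · intro r hr
        have hrtb : r ∈ Set.Ioo t₁ b := ⟨ht.1.trans hr.1, hr.2.trans hs2⟩
        have hMdet : IsUnit ((J r)ᵀ * J r).det :=
          (Matrix.isUnit_iff_isUnit_det _).mp (hZunit r hrtb)
        set M : Matrix (Fin n) (Fin n) ℝ := (J r)ᵀ * J r with hMdef
        set y : Fin n → ℝ := M⁻¹ *ᵥ x with hydef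
        have hMy : M *ᵥ y = x := by
          rw [hydef, Matrix.mulVec_mulVec, Matrix.mul_nonsing_inv _ hMdet, Matrix.one_mulVec]
        have hy0 : y ≠ 0 := by
          intro h0
          rw [h0, Matrix.mulVec_zero] at hMy
          exact hx0 hMy.symm
        have hJy : J r *ᵥ y ≠ 0 := by
          intro h0
          apply hy0
          have h1 : (J r)⁻¹ *ᵥ (J r *ᵥ y) = y := by
            rw [Matrix.mulVec_mulVec, Matrix.nonsing_inv_mul _ (hdet r hrtb),
              Matrix.one_mulVec]
          rw [← h1, h0, Matrix.mulVec_zero]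
        show 0 < x ⬝ᵥ (M⁻¹ *ᵥ x)
        have hexp : x ⬝ᵥ (M⁻¹ *ᵥ x) = (J r *ᵥ y) ⬝ᵥ (J r *ᵥ y) := by
          conv_lhs => rw [← hydef, ← hMy, hMdef, ← Matrix.mulVec_mulVec,
            dotProduct_comm, Matrix.dotProduct_mulVec, Matrix.vecMul_transpose]
        rw [hexp]
        have hnn : 0 ≤ (J r *ᵥ y) ⬝ᵥ (J r *ᵥ y) :=
          Finset.sum_nonneg fun i _ => mul_self_nonneg _
        have hne : (J r *ᵥ y) ⬝ᵥ (J r *ᵥ y) ≠ 0 :=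
          fun h => hJy (dotProduct_self_eq_zero.mp h)
        exact lt_of_le_of_ne hnn (Ne.symm hne)
      · exact ht.2
    have hzero : (∫ r in t..s, x ⬝ᵥ (((J r)ᵀ * J r)⁻¹ *ᵥ x)) = 0 := by
      have h1 : (∫ r in t..s, x ⬝ᵥ (((J r)ᵀ * J r)⁻¹ *ᵥ x))
          = L (∫ r in t..s, ((J r)ᵀ * J r)⁻¹) := by
        exact hLint
      rw [h1, hLapp, hxZ, dotProduct_zero]
    rw [hzero] at hposint
    exact lt_irrefl _ hposint
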